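/- Theorem 4 (uplink–downlink duality for cell-free massive MIMO with limited fronthaul): fix positive integers M, N, K, reals ρ > 0 and r ≥ 0, positive matrices β, γ ∈ ℝ^{M×K}, nonnegative symmetric pilot correlations π_{kk'} (k ≠ k'), coefficients u ∈ ℝ^{M×K} with Σ_m u_{mk} γ_{mk} ≠ 0 for every k, and power vectors q, p ∈ ℝ^K. Assume that all the uplink denominators Den_k^UP(q) and downlink denominators Den_k^DL(p) are strictly positive and that the same SINR is realized in the uplink and the virtual downlink for every user, i.e., SINR_k^DL(U,p) = SINR_k^UP(U,q) for all k = 1,…,K. Then the total transmit powers are related by Σ_{k=1}^K q_k = (r + 1) · Σ_{m=1}^M Σ_{k=1}^K γ_{mk} · p_k · u_{mk}²; equivalently, with w_{mk} = √(p_k)·u_{mk}, Σ_k q_k = (σ_ė²/ȧ² + 1) Σ_{m,k} γ_{mk} w_{mk}² (the normalization constant matching the SINR expressions (37)–(38)). -/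

import Mathlib

open Finset

/-- Uplink SINR denominator of user `k` (equation (38) of the paper). -/
noncomputable def DenUP {M K : ℕ} (N : ℕ) (ρ r : ℝ)
    (β γ u : Matrix (Fin M) (Fin K) ℝ) (π : Fin K → Fin K → ℝ)
    (q : Fin K → ℝ) (k : Fin K) : ℝ :=
  (N : ℝ) ^ 2 * ∑ k' ∈ Finset.univ.erase k,
      q k' * π k k' * (∑ m, u m k * γ m k * β m k' / β m k) ^ 2 +
    (N : ℝ) * ∑ k', q k' * ∑ m, (u m k) ^ 2 * β m k' *
      (r * (2 * β m k - γ m k) + γ m k) +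
    (N : ℝ) / ρ * (r + 1) * ∑ m, (u m k) ^ 2 * γ m k

/-- Uplink SINR of user `k` (equation (38) of the paper). -/
noncomputable def SINRUP {M K : ℕ} (N : ℕ) (ρ r : ℝ)
    (β γ u : Matrix (Fin M) (Fin K) ℝ) (π : Fin K → Fin K → ℝ)
    (q : Fin K → ℝ) (k : Fin K) : ℝ :=
  (N : ℝ) ^ 2 * q k * (∑ m, u m k * γ m k) ^ 2 / DenUP N ρ r β γ u π q k

/-- Virtual downlink SINR denominator of user `k` (equation (37) of the paper). -/
noncomputable def DenDL {M K : ℕ} (N : ℕ) (ρ r : ℝ)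
    (β γ u : Matrix (Fin M) (Fin K) ℝ) (π : Fin K → Fin K → ℝ)
    (p : Fin K → ℝ) (k : Fin K) : ℝ :=
  (N : ℝ) ^ 2 * ∑ k' ∈ Finset.univ.erase k,
      p k' * π k' k * (∑ m, u m k' * γ m k' * β m k / β m k') ^ 2 +
    (N : ℝ) * ∑ k', p k' * ∑ m, (u m k') ^ 2 * β m k *
      (r * (2 * β m k' - γ m k') + γ m k') +
    (N : ℝ) / ρ

/-- Virtual downlink SINR of user `k` (equation (37) of the paper). -/
noncomputable def SINRDL {M K : ℕ} (N : ℕ) (ρ r : ℝ)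
    (β γ u : Matrix (Fin M) (Fin K) ℝ) (π : Fin K → Fin K → ℝ)
    (p : Fin K → ℝ) (k : Fin K) : ℝ :=
  (N : ℝ) ^ 2 * p k * (∑ m, u m k * γ m k) ^ 2 / DenDL N ρ r β γ u π p k

/-!
Equal SINRs with nonzero array gains cross-multiply to `p k * DenUP q k = q k * DenDL p k`.
Both denominators are affine in the power vector with one interference matrix `A`, taken once
as is and once transposed: `DenUP q = A q + c` and `DenDL p = Aᵀ p + N / ρ`. Summing over `k`,
the interference terms `pᵀ A q` on the two sides coincide, leaving `pᵀ c = (N / ρ) ∑ k, q k`.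
-/

open Matrix

theorem dotProduct_eq_mul_sum_of_mul_mulVec_add_eq {ι R : Type*} [Fintype ι] [CommRing R]
    (A : Matrix ι ι R) (p q c : ι → R) (d : R)
    (h : ∀ k, p k * ((A *ᵥ q) k + c k) = q k * ((Aᵀ *ᵥ p) k + d)) :
    p ⬝ᵥ c = d * ∑ k, q k := by
  have hsum : p ⬝ᵥ (A *ᵥ q + c) = q ⬝ᵥ (Aᵀ *ᵥ p + d • 1) := by
    simpa [dotProduct] using Finset.sum_congr rfl fun k _ => h k
  have hswap : q ⬝ᵥ (Aᵀ *ᵥ p) = p ⬝ᵥ (A *ᵥ q) := by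
    rw [dotProduct_mulVec, vecMul_transpose, dotProduct_comm]
  rw [dotProduct_add, dotProduct_add, hswap, dotProduct_smul, dotProduct_one, smul_eq_mul] at hsum
  exact add_left_cancel hsum

noncomputable def interferenceMatrix {M K : ℕ} (N : ℕ) (r : ℝ)
    (β γ u : Matrix (Fin M) (Fin K) ℝ) (π : Fin K → Fin K → ℝ) : Matrix (Fin K) (Fin K) ℝ :=
  fun k k' =>
    (N : ℝ) ^ 2 * (if k' ≠ k then π k k' * (∑ m, u m k * γ m k * β m k' / β m k) ^ 2 else 0) +
      (N : ℝ) * ∑ m, (u m k) ^ 2 * β m k' * (r * (2 * β m k - γ m k) + γ m k)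

theorem DenUP_eq_mulVec_add {M K : ℕ} (N : ℕ) (ρ r : ℝ)
    (β γ u : Matrix (Fin M) (Fin K) ℝ) (π : Fin K → Fin K → ℝ) (q : Fin K → ℝ) (k : Fin K) :
    DenUP N ρ r β γ u π q k =
      (interferenceMatrix N r β γ u π *ᵥ q) k +
        (N : ℝ) / ρ * (r + 1) * ∑ m, (u m k) ^ 2 * γ m k := by
  rw [DenUP, ← Finset.filter_ne', Finset.sum_filter]
  simp only [interferenceMatrix, mulVec, dotProduct, add_mul, Finset.sum_add_distrib]
  congr 2 <;> rw [Finset.mul_sum] <;> refine Finset.sum_congr rfl fun k' _ => ?_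
  · split_ifs <;> ring
  · ring

theorem DenDL_eq_transpose_mulVec_add {M K : ℕ} (N : ℕ) (ρ r : ℝ)
    (β γ u : Matrix (Fin M) (Fin K) ℝ) (π : Fin K → Fin K → ℝ) (p : Fin K → ℝ) (k : Fin K) :
    DenDL N ρ r β γ u π p k = ((interferenceMatrix N r β γ u π)ᵀ *ᵥ p) k + (N : ℝ) / ρ := by
  rw [DenDL, ← Finset.filter_ne, Finset.sum_filter]
  simp only [interferenceMatrix, mulVec, dotProduct, transpose_apply, add_mul,
    Finset.sum_add_distrib]
  congr 2 <;> rw [Finset.mul_sum] <;> refine Finset.sum_congr rfl fun k' _ => ?_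
  · split_ifs <;> ring
  · ring

theorem mul_DenUP_eq_mul_DenDL_of_SINRDL_eq_SINRUP {M K : ℕ} {N : ℕ} (hN : N ≠ 0) {ρ r : ℝ}
    {β γ u : Matrix (Fin M) (Fin K) ℝ} {π : Fin K → Fin K → ℝ} {q p : Fin K → ℝ} {k : Fin K}
    (hu : ∑ m, u m k * γ m k ≠ 0) (hUP : DenUP N ρ r β γ u π q k ≠ 0)
    (hDL : DenDL N ρ r β γ u π p k ≠ 0)
    (h : SINRDL N ρ r β γ u π p k = SINRUP N ρ r β γ u π q k) :
    p k * DenUP N ρ r β γ u π q k = q k * DenDL N ρ r β γ u π p k := by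
  rw [SINRDL, SINRUP, div_eq_div_iff hDL hUP] at h
  have hgain : (N : ℝ) ^ 2 * (∑ m, u m k * γ m k) ^ 2 ≠ 0 := by positivity
  exact mul_left_cancel₀ hgain (by linear_combination h)

theorem uplink_downlink_duality_general
    {M K : ℕ} (N : ℕ) (hN : 0 < N)
    (ρ r : ℝ) (hρ : 0 < ρ)
    (β γ u : Matrix (Fin M) (Fin K) ℝ)
    (π : Fin K → Fin K → ℝ)
    (hu : ∀ k, (∑ m, u m k * γ m k) ≠ 0)
    (q p : Fin K → ℝ)
    (hDenUP : ∀ k, 0 < DenUP N ρ r β γ u π q k)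
    (hDenDL : ∀ k, 0 < DenDL N ρ r β γ u π p k)
    (hdual : ∀ k, SINRDL N ρ r β γ u π p k = SINRUP N ρ r β γ u π q k) :
    ∑ k, q k = (r + 1) * ∑ m, ∑ k, γ m k * p k * (u m k) ^ 2 := by
  have hnoise := dotProduct_eq_mul_sum_of_mul_mulVec_add_eq (interferenceMatrix N r β γ u π) p q
    (fun k => (N : ℝ) / ρ * (r + 1) * ∑ m, (u m k) ^ 2 * γ m k) ((N : ℝ) / ρ) fun k => by
      rw [← DenUP_eq_mulVec_add, ← DenDL_eq_transpose_mulVec_add]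
      exact mul_DenUP_eq_mul_DenDL_of_SINRDL_eq_SINRUP hN.ne' (hu k) (hDenUP k).ne'
        (hDenDL k).ne' (hdual k)
  have hNρ : (N : ℝ) / ρ ≠ 0 := by positivity
  refine mul_left_cancel₀ hNρ ?_
  rw [← hnoise]
  simp only [dotProduct, Finset.mul_sum]
  rw [Finset.sum_comm]
  exact Finset.sum_congr rfl fun m _ => Finset.sum_congr rfl fun k _ => by ring

/-- Theorem 4 of the paper (uplink–downlink duality for cell-free massive MIMO with
limited fronthaul): if the same SINR is realized in the uplink and the virtual
downlink for every user, then the total uplink transmit power equals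
`(r + 1) · Σ_{m,k} γ_{mk} p_k u_{mk}²`. -/
theorem uplink_downlink_duality
    {M K : ℕ} (hM : 0 < M) (hK : 0 < K) (N : ℕ) (hN : 0 < N)
    (ρ r : ℝ) (hρ : 0 < ρ) (hr : 0 ≤ r)
    (β γ u : Matrix (Fin M) (Fin K) ℝ)
    (hβ : ∀ m k, 0 < β m k) (hγ : ∀ m k, 0 < γ m k)
    (π : Fin K → Fin K → ℝ) (hπ : ∀ k k', 0 ≤ π k k')
    (hπsymm : ∀ k k', k ≠ k' → π k k' = π k' k)
    (hu : ∀ k, (∑ m, u m k * γ m k) ≠ 0)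
    (q p : Fin K → ℝ)
    (hDenUP : ∀ k, 0 < DenUP N ρ r β γ u π q k)
    (hDenDL : ∀ k, 0 < DenDL N ρ r β γ u π p k)
    (hdual : ∀ k, SINRDL N ρ r β γ u π p k = SINRUP N ρ r β γ u π q k) :
    ∑ k, q k = (r + 1) * ∑ m, ∑ k, γ m k * p k * (u m k) ^ 2 :=
  uplink_downlink_duality_general N hN ρ r hρ β γ u π hu q p hDenUP hDenDL hdual
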